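/- arXiv:2505.20313 — 6 statements merged into one kernel-verified Lean document; each statement's English description precedes it below -/
import Mathlib

section
/- Let 0 < ε < 1 and let x : ℕ → {0,1} be a binary assignment. For a conjunctive clause with positive literal index set T and negative literal index set K, define e(x, h) = -h·(∑_{t∈T} x_t - ∑_{k∈K} x_k - |T| + ε) for h ∈ {0,1}. Then min_{h∈{0,1}} e(x,h) = -ε if the clause is satisfied by x (i.e., x_t = 1 for all t∈T and x_k = 0 for all k∈K), and min_{h∈{0,1}} e(x,h) = 0 otherwise. -/
theorem clause_energy_min (T K : Finset ℕ) (hdisj : Disjoint T K) (ε : ℝ)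
    (hε : 0 < ε) (hε1 : ε < 1) (x : ℕ → ℝ) (hx : ∀ i, x i = 0 ∨ x i = 1) :
    (((∀ t ∈ T, x t = 1) ∧ (∀ k ∈ K, x k = 0)) →
      min (-(0 : ℝ) * (∑ t ∈ T, x t - ∑ k ∈ K, x k - (T.card : ℝ) + ε))
          (-(1 : ℝ) * (∑ t ∈ T, x t - ∑ k ∈ K, x k - (T.card : ℝ) + ε)) = -ε) ∧
    (¬ ((∀ t ∈ T, x t = 1) ∧ (∀ k ∈ K, x k = 0)) →
      min (-(0 : ℝ) * (∑ t ∈ T, x t - ∑ k ∈ K, x k - (T.card : ℝ) + ε))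
          (-(1 : ℝ) * (∑ t ∈ T, x t - ∑ k ∈ K, x k - (T.card : ℝ) + ε)) = 0) := by
  constructor
  · rintro ⟨hT, hK⟩
    have h1 : ∑ t ∈ T, x t = (T.card : ℝ) := by
      rw [Finset.sum_congr rfl hT]; simp
    have h2 : ∑ k ∈ K, x k = 0 := Finset.sum_eq_zero hK
    rw [h1, h2]
    have : ((T.card : ℝ) - 0 - (T.card : ℝ) + ε) = ε := by ring
    rw [this]
    rw [min_eq_right (by linarith [neg_nonpos_of_nonneg hε.le] : -(1:ℝ) * ε ≤ -(0:ℝ)*ε)]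
    ring
  · intro h
    have key : ∑ t ∈ T, x t - ∑ k ∈ K, x k ≤ (T.card : ℝ) - 1 := by
      push_neg at h
      by_cases hT : ∀ t ∈ T, x t = 1
      · obtain ⟨k, hk, hxk⟩ := h hT
        have hxk1 : x k = 1 := (hx k).resolve_left hxk
        have h1 : ∑ t ∈ T, x t ≤ (T.card : ℝ) := by
          calc ∑ t ∈ T, x t ≤ ∑ _t ∈ T, (1:ℝ) := Finset.sum_le_sum (fun i _ => by
                rcases hx i with h | h <;> simp [h])
            _ = (T.card : ℝ) := by simp
        have h2 : (1:ℝ) ≤ ∑ k ∈ K, x k := by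
          calc (1:ℝ) = x k := hxk1.symm
            _ ≤ ∑ k ∈ K, x k := Finset.single_le_sum (fun i _ => by
                rcases hx i with h | h <;> simp [h]) hk
        linarith
      · push_neg at hT
        obtain ⟨t, ht, hxt⟩ := hT
        have hxt0 : x t = 0 := (hx t).resolve_right hxt
        have h1 : ∑ s ∈ T, x s ≤ (T.card : ℝ) - 1 := by
          have := Finset.sum_erase_add T x ht
          have hle : ∑ s ∈ T.erase t, x s ≤ ((T.erase t).card : ℝ) := by
            calc ∑ s ∈ T.erase t, x s ≤ ∑ _s ∈ T.erase t, (1:ℝ) :=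
                Finset.sum_le_sum (fun i _ => by rcases hx i with h | h <;> simp [h])
              _ = ((T.erase t).card : ℝ) := by simp
          have hcard : ((T.erase t).card : ℝ) = (T.card : ℝ) - 1 := by
            rw [Finset.card_erase_of_mem ht]
            have : 1 ≤ T.card := Finset.card_pos.mpr ⟨t, ht⟩
            push_cast [Nat.cast_sub this]
            ring
          linarith [hle, hcard ▸ hle]
        have h2 : (0:ℝ) ≤ ∑ k ∈ K, x k :=
          Finset.sum_nonneg (fun i _ => by rcases hx i with h | h <;> simp [h])
        linarith
    have hneg : ∑ t ∈ T, x t - ∑ k ∈ K, x k - (T.card : ℝ) + ε < 0 := by linarith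
    rw [min_eq_left (by nlinarith : -(0:ℝ) * _ ≤ -(1:ℝ) * (∑ t ∈ T, x t - ∑ k ∈ K, x k - (T.card : ℝ) + ε))]
    ring
end

section
/- Let φ be a strict DNF with conjunctive clauses indexed by j, each with positive literal sets T_j and negative literal sets K_j, and let 0 < ε < 1. Define the RBM energy E(x,h) = -∑_j h_j·(∑_{t∈T_j} x_t - ∑_{k∈K_j} x_k - |T_j| + ε) for binary x and h. Then for every binary assignment x, s_φ(x) = -(1/ε)·min_{h∈{0,1}^J} E(x,h), where s_φ(x) is 1 if x satisfies φ and 0 otherwise. -/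
open Classical in
theorem sdnf_rbm_energy {ι : Type*} (J : Finset ι) (T K : ι → Finset ℕ) (ε : ℝ)
    (hε : 0 < ε) (hε1 : ε < 1)
    (hdisj : ∀ j ∈ J, Disjoint (T j) (K j))
    (hstrict : ∀ y : ℕ → ℝ, (∀ i, y i = 0 ∨ y i = 1) →
      ∀ j1 ∈ J, ∀ j2 ∈ J,
        ((∀ t ∈ T j1, y t = 1) ∧ (∀ k ∈ K j1, y k = 0)) →
        ((∀ t ∈ T j2, y t = 1) ∧ (∀ k ∈ K j2, y k = 0)) → j1 = j2)
    (x : ℕ → ℝ) (hx : ∀ i, x i = 0 ∨ x i = 1) :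
    ∃ m : ℝ,
      IsLeast {v : ℝ | ∃ h : ι → ℝ, (∀ j, h j = 0 ∨ h j = 1) ∧
        v = -∑ j ∈ J, h j * (∑ t ∈ T j, x t - ∑ k ∈ K j, x k - ((T j).card : ℝ) + ε)} m ∧
      (if ∃ j ∈ J, (∀ t ∈ T j, x t = 1) ∧ (∀ k ∈ K j, x k = 0) then (1 : ℝ) else 0)
        = -(1 / ε) * m := by
  classical
  set a : ι → ℝ := fun j => ∑ t ∈ T j, x t - ∑ k ∈ K j, x k - ((T j).card : ℝ) + ε with ha
  have hx0 : ∀ i, 0 ≤ x i := by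
    intro i; rcases hx i with h | h <;> rw [h] <;> norm_num
  have hx1 : ∀ i, x i ≤ 1 := by
    intro i; rcases hx i with h | h <;> rw [h] <;> norm_num
  have hTle : ∀ j, ∑ t ∈ T j, x t ≤ ((T j).card : ℝ) := by
    intro j
    calc ∑ t ∈ T j, x t ≤ ∑ _t ∈ T j, (1:ℝ) := Finset.sum_le_sum (fun i _ => hx1 i)
      _ = ((T j).card : ℝ) := by simp
  have hKnn : ∀ j, (0:ℝ) ≤ ∑ k ∈ K j, x k := fun j => Finset.sum_nonneg (fun i _ => hx0 i)
  have hsat : ∀ j, ((∀ t ∈ T j, x t = 1) ∧ (∀ k ∈ K j, x k = 0)) → a j = ε := by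
    intro j ⟨h1, h2⟩
    have e1 : ∑ t ∈ T j, x t = ((T j).card : ℝ) := by
      rw [Finset.sum_congr rfl h1]; simp
    have e2 : ∑ k ∈ K j, x k = 0 := by
      rw [Finset.sum_congr rfl h2]; simp
    simp [ha, e1, e2]
  have hunsat : ∀ j, ¬((∀ t ∈ T j, x t = 1) ∧ (∀ k ∈ K j, x k = 0)) → a j < 0 := by
    intro j hns
    have key : ∑ t ∈ T j, x t - ∑ k ∈ K j, x k ≤ ((T j).card : ℝ) - 1 := by
      rw [not_and_or] at hns
      rcases hns with h | h
      · push_neg at h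
        obtain ⟨t0, ht0, hxt0⟩ := h
        have hxt0' : x t0 = 0 := (hx t0).resolve_right hxt0
        have h2 : ∑ t ∈ T j, x t ≤ ((T j).card : ℝ) - 1 := by
          rw [← Finset.add_sum_erase _ _ ht0, hxt0']
          have hle : ∑ t ∈ (T j).erase t0, x t ≤ (((T j).erase t0).card : ℝ) := by
            calc ∑ t ∈ (T j).erase t0, x t ≤ ∑ _t ∈ (T j).erase t0, (1:ℝ) :=
                  Finset.sum_le_sum (fun i _ => hx1 i)
              _ = (((T j).erase t0).card : ℝ) := by simp
          rw [Finset.card_erase_of_mem ht0] at hle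
          have hc : 1 ≤ (T j).card := Finset.card_pos.mpr ⟨t0, ht0⟩
          have : (((T j).card - 1 : ℕ) : ℝ) = ((T j).card : ℝ) - 1 := by
            push_cast [hc]; ring
          rw [this] at hle
          linarith
        linarith [hKnn j]
      · push_neg at h
        obtain ⟨k0, hk0, hxk0⟩ := h
        have hxk0' : x k0 = 1 := (hx k0).resolve_left hxk0
        have h2 : (1:ℝ) ≤ ∑ k ∈ K j, x k := by
          rw [← Finset.add_sum_erase _ _ hk0, hxk0']
          have : 0 ≤ ∑ k ∈ (K j).erase k0, x k := Finset.sum_nonneg (fun i _ => hx0 i)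
          linarith
        linarith [hTle j]
    simp only [ha]; linarith
  set hstar : ι → ℝ := fun j => if 0 < a j then (1:ℝ) else 0 with hhstar
  refine ⟨-∑ j ∈ J, hstar j * a j, ⟨⟨hstar, fun j => by
      by_cases h : 0 < a j <;> simp [hhstar, h], rfl⟩, ?_⟩, ?_⟩
  · rintro v ⟨h, hb, rfl⟩
    have : ∑ j ∈ J, h j * a j ≤ ∑ j ∈ J, hstar j * a j := by
      refine Finset.sum_le_sum (fun j _ => ?_)
      by_cases hpos : 0 < a j
      · have : h j ≤ 1 := by rcases hb j with e | e <;> rw [e] <;> norm_num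
        have : h j * a j ≤ 1 * a j := mul_le_mul_of_nonneg_right this hpos.le
        simpa [hhstar, hpos] using this
      · have h0 : h j * a j ≤ 0 := mul_nonpos_of_nonneg_of_nonpos
          (by rcases hb j with e | e <;> rw [e] <;> norm_num) (not_lt.mp hpos)
        simpa [hhstar, hpos] using h0
    linarith
  · by_cases hP : ∃ j ∈ J, (∀ t ∈ T j, x t = 1) ∧ (∀ k ∈ K j, x k = 0)
    · obtain ⟨j0, hj0, hsat0⟩ := hP
      have hsum : ∑ j ∈ J, hstar j * a j = ε := by
        rw [Finset.sum_eq_single_of_mem j0 hj0]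
        · have ha0 : a j0 = ε := hsat j0 hsat0
          simp [hhstar, ha0, hε]
        · intro j hj hne
          have : ¬((∀ t ∈ T j, x t = 1) ∧ (∀ k ∈ K j, x k = 0)) := by
            intro hs
            exact hne (hstrict x hx j hj j0 hj0 hs hsat0)
          have := hunsat j this
          simp [hhstar, not_lt.mpr this.le]
      rw [if_pos ⟨j0, hj0, hsat0⟩, hsum]
      field_simp
    · have hsum : ∑ j ∈ J, hstar j * a j = 0 := by
        refine Finset.sum_eq_zero (fun j hj => ?_)
        have : ¬((∀ t ∈ T j, x t = 1) ∧ (∀ k ∈ K j, x k = 0)) := fun hs => hP ⟨j, hj, hs⟩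
        have := hunsat j this
        simp [hhstar, not_lt.mpr this.le]
      rw [if_neg hP, hsum]
      simp
end

section
/- Let φ be a CNF with M clauses, each clause transformed into an equivalent strict DNF via variable elimination, and let E(x,h) be the sum over all M clause-SDNFs of the corresponding RBM energy terms with parameter 0 < ε < 1. Then for any binary assignment x, min_h E(x,h) = -M'·ε where M' is the number of clauses of φ satisfied by x; in particular, φ is satisfied by x if and only if -(1/ε)·min_h E(x,h) = M. -/
open Classical in
theorem cnf_rbm_energy {ι : Type*} (M : ℕ) (J : Fin M → Finset ι)
    (T K : Fin M → ι → Finset ℕ) (ε : ℝ) (hε : 0 < ε) (hε1 : ε < 1)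
    (hdisj : ∀ m, ∀ j ∈ J m, Disjoint (T m j) (K m j))
    (hstrict : ∀ y : ℕ → ℝ, (∀ i, y i = 0 ∨ y i = 1) → ∀ m, ∀ j1 ∈ J m, ∀ j2 ∈ J m,
      ((∀ t ∈ T m j1, y t = 1) ∧ (∀ k ∈ K m j1, y k = 0)) →
      ((∀ t ∈ T m j2, y t = 1) ∧ (∀ k ∈ K m j2, y k = 0)) → j1 = j2)
    (x : ℕ → ℝ) (hx : ∀ i, x i = 0 ∨ x i = 1) :
    ∃ mn : ℝ,
      IsLeast {v : ℝ | ∃ h : Fin M → ι → ℝ, (∀ m j, h m j = 0 ∨ h m j = 1) ∧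
        v = ∑ m : Fin M, ∑ j ∈ J m,
          -h m j * (∑ t ∈ T m j, x t - ∑ k ∈ K m j, x k - ((T m j).card : ℝ) + ε)} mn ∧
      mn = -((Finset.univ.filter (fun m : Fin M =>
          ∃ j ∈ J m, (∀ t ∈ T m j, x t = 1) ∧ (∀ k ∈ K m j, x k = 0))).card : ℝ) * ε ∧
      ((∀ m : Fin M, ∃ j ∈ J m, (∀ t ∈ T m j, x t = 1) ∧ (∀ k ∈ K m j, x k = 0)) ↔
        -(1 / ε) * mn = (M : ℝ)) := by
  have hx0 : ∀ i, (0:ℝ) ≤ x i := fun i => by rcases hx i with h | h <;> simp [h]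
  have hx1 : ∀ i, x i ≤ 1 := fun i => by rcases hx i with h | h <;> simp [h]
  -- abbreviations
  let sat : Fin M → ι → Prop := fun m j =>
    (∀ t ∈ T m j, x t = 1) ∧ (∀ k ∈ K m j, x k = 0)
  let a : Fin M → ι → ℝ := fun m j =>
    ∑ t ∈ T m j, x t - ∑ k ∈ K m j, x k - ((T m j).card : ℝ) + ε
  have hTle : ∀ m j, ∑ t ∈ T m j, x t ≤ ((T m j).card : ℝ) := by
    intro m j
    calc ∑ t ∈ T m j, x t ≤ ∑ t ∈ T m j, 1 := Finset.sum_le_sum (fun t _ => hx1 t)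
      _ = ((T m j).card : ℝ) := by simp
  have hKge : ∀ m j, (0:ℝ) ≤ ∑ k ∈ K m j, x k :=
    fun m j => Finset.sum_nonneg fun k _ => hx0 k
  have hsat_a : ∀ m j, sat m j → a m j = ε := by
    intro m j hs
    have h1 : ∑ t ∈ T m j, x t = ((T m j).card : ℝ) := by
      rw [Finset.sum_congr rfl hs.1]; simp
    have h2 : ∑ k ∈ K m j, x k = 0 := by
      rw [Finset.sum_congr rfl hs.2]; simp
    simp only [a, h1, h2]; ring
  have hnsat_a : ∀ m j, ¬ sat m j → a m j ≤ ε - 1 := by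
    intro m j hns
    rw [not_and_or] at hns
    rcases hns with h | h
    · push_neg at h
      obtain ⟨t, ht, hxt⟩ := h
      have hxt0 : x t = 0 := (hx t).resolve_right hxt
      have hcard : 1 ≤ (T m j).card := Finset.card_pos.2 ⟨t, ht⟩
      have hsum : ∑ s ∈ T m j, x s ≤ ((T m j).card : ℝ) - 1 := by
        rw [← Finset.add_sum_erase _ _ ht, hxt0, zero_add]
        calc ∑ s ∈ (T m j).erase t, x s ≤ ∑ s ∈ (T m j).erase t, 1 :=
              Finset.sum_le_sum fun s _ => hx1 s
          _ = (((T m j).erase t).card : ℝ) := by simp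
          _ = ((T m j).card : ℝ) - 1 := by
              rw [Finset.card_erase_of_mem ht, Nat.cast_sub hcard, Nat.cast_one]
      have := hKge m j
      simp only [a]; linarith
    · push_neg at h
      obtain ⟨k, hk, hxk⟩ := h
      have hxk1 : x k = 1 := (hx k).resolve_left hxk
      have hsum : (1:ℝ) ≤ ∑ s ∈ K m j, x s := by
        rw [← hxk1]; exact Finset.single_le_sum (fun s _ => hx0 s) hk
      have := hTle m j
      simp only [a]; linarith
  -- inner sum with the optimal hidden units
  have key : ∀ m : Fin M, (∑ j ∈ J m, (if sat m j then (-ε : ℝ) else 0)) =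
      if ∃ j ∈ J m, sat m j then (-ε : ℝ) else 0 := by
    intro m
    by_cases hex : ∃ j ∈ J m, sat m j
    · obtain ⟨j0, hj0, hs0⟩ := hex
      rw [if_pos ⟨j0, hj0, hs0⟩, Finset.sum_eq_single_of_mem j0 hj0]
      · rw [if_pos hs0]
      · intro j hj hne
        rw [if_neg]
        intro hs
        exact hne (hstrict x hx m j hj j0 hj0 hs hs0)
    · rw [if_neg hex]
      exact Finset.sum_eq_zero fun j hj => if_neg (fun hs => hex ⟨j, hj, hs⟩)
  set S : Finset (Fin M) := Finset.univ.filter (fun m : Fin M =>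
      ∃ j ∈ J m, (∀ t ∈ T m j, x t = 1) ∧ (∀ k ∈ K m j, x k = 0)) with hS
  have hmnval : (∑ m : Fin M, if ∃ j ∈ J m, sat m j then (-ε : ℝ) else 0)
      = -(S.card : ℝ) * ε := by
    rw [Finset.sum_ite, Finset.sum_const, Finset.sum_const_zero, add_zero]
    have : Finset.univ.filter (fun m : Fin M => ∃ j ∈ J m, sat m j) = S := rfl
    rw [this, nsmul_eq_mul]
    ring
  refine ⟨-(S.card : ℝ) * ε, ⟨⟨fun m j => if sat m j then 1 else 0,
      fun m j => by
        by_cases h : sat m j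
        · exact Or.inr (if_pos h)
        · exact Or.inl (if_neg h), ?_⟩, ?_⟩, rfl, ?_⟩
  · -- value at the optimal h
    rw [← hmnval, ← Finset.sum_congr rfl (fun m _ => key m)]
    refine Finset.sum_congr rfl fun m _ => Finset.sum_congr rfl fun j hj => ?_
    by_cases hs : sat m j
    · have ha := hsat_a m j hs
      simp only [a] at ha
      simp only [if_pos hs, ha]
      ring
    · simp only [if_neg hs]
      ring
  · -- lower bound
    rintro v ⟨h, hh, rfl⟩
    rw [← hmnval, ← Finset.sum_congr rfl (fun m _ => key m)]
    refine Finset.sum_le_sum fun m _ => Finset.sum_le_sum fun j hj => ?_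
    have hh0 : 0 ≤ h m j := by rcases hh m j with h' | h' <;> simp [h']
    have hh1 : h m j ≤ 1 := by rcases hh m j with h' | h' <;> simp [h']
    by_cases hs : sat m j
    · rw [if_pos hs]
      have ha : a m j = ε := hsat_a m j hs
      simp only [a] at ha
      rw [ha]
      nlinarith
    · rw [if_neg hs]
      have ha : a m j ≤ ε - 1 := hnsat_a m j hs
      simp only [a] at ha
      nlinarith
  · -- equivalence
    have hεne : (ε : ℝ) ≠ 0 := ne_of_gt hε
    have hcalc : -(1 / ε) * (-(S.card : ℝ) * ε) = (S.card : ℝ) := by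
      field_simp
    rw [hcalc]
    constructor
    · intro hall
      have : S = Finset.univ := Finset.filter_eq_self.mpr fun m _ => hall m
      rw [this, Finset.card_univ, Fintype.card_fin]
    · intro heq
      have hScard : S.card = M := by exact_mod_cast heq
      have : S = Finset.univ := Finset.eq_univ_of_card S (by simp [hScard])
      intro m
      have hm : m ∈ S := this ▸ Finset.mem_univ m
      exact (Finset.mem_filter.mp hm).2
end

section
/- Let Φ = {(w_1, φ_1), ..., (w_n, φ_n)} be a weighted set of formulas where each φ_i is given as a strict DNF, and construct the weighted RBM energy E(x,h) where each clause-energy term e_j for a conjunctive clause of φ_i is multiplied by w_i > 0. Then for every binary assignment x, -(1/ε)·min_h E(x,h) = ∑_{i : x satisfies φ_i} w_i. -/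
open Classical in
theorem weighted_kb_rbm_energy {ι : Type*} (n : ℕ) (w : Fin n → ℝ)
    (J : Fin n → Finset ι) (T K : Fin n → ι → Finset ℕ) (ε : ℝ)
    (hε : 0 < ε) (hε1 : ε < 1) (hw : ∀ i, 0 < w i)
    (hdisj : ∀ i, ∀ j ∈ J i, Disjoint (T i j) (K i j))
    (hstrict : ∀ y : ℕ → ℝ, (∀ v, y v = 0 ∨ y v = 1) → ∀ i, ∀ j1 ∈ J i, ∀ j2 ∈ J i,
      ((∀ t ∈ T i j1, y t = 1) ∧ (∀ k ∈ K i j1, y k = 0)) →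
      ((∀ t ∈ T i j2, y t = 1) ∧ (∀ k ∈ K i j2, y k = 0)) → j1 = j2)
    (x : ℕ → ℝ) (hx : ∀ v, x v = 0 ∨ x v = 1) :
    ∃ m : ℝ,
      IsLeast {v : ℝ | ∃ h : Fin n → ι → ℝ, (∀ i j, h i j = 0 ∨ h i j = 1) ∧
        v = ∑ i : Fin n, ∑ j ∈ J i,
          w i * (-h i j * (∑ t ∈ T i j, x t - ∑ k ∈ K i j, x k - ((T i j).card : ℝ) + ε))} m ∧
      -(1 / ε) * m = ∑ i ∈ Finset.univ.filter (fun i : Fin n =>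
          ∃ j ∈ J i, (∀ t ∈ T i j, x t = 1) ∧ (∀ k ∈ K i j, x k = 0)), w i := by
  classical
  set sat : Fin n → ι → Prop :=
    fun i j => (∀ t ∈ T i j, x t = 1) ∧ (∀ k ∈ K i j, x k = 0) with hsatdef
  have hx0 : ∀ v, 0 ≤ x v := fun v => by rcases hx v with h | h <;> rw [h] <;> norm_num
  have hx1 : ∀ v, x v ≤ 1 := fun v => by rcases hx v with h | h <;> rw [h] <;> norm_num
  have hsum_le : ∀ s : Finset ℕ, ∑ t ∈ s, x t ≤ (s.card : ℝ) := by
    intro s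
    calc ∑ t ∈ s, x t ≤ ∑ t ∈ s, (1 : ℝ) := Finset.sum_le_sum fun t _ => hx1 t
    _ = s.card := by simp
  have hsum_nonneg : ∀ s : Finset ℕ, (0 : ℝ) ≤ ∑ t ∈ s, x t :=
    fun s => Finset.sum_nonneg fun t _ => hx0 t
  have hcsat : ∀ i j, sat i j →
      ∑ t ∈ T i j, x t - ∑ k ∈ K i j, x k - ((T i j).card : ℝ) + ε = ε := by
    rintro i j ⟨h1, h2⟩
    have e1 : ∑ t ∈ T i j, x t = ((T i j).card : ℝ) := by
      rw [Finset.sum_congr rfl h1]; simp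
    have e2 : ∑ k ∈ K i j, x k = 0 := by
      rw [Finset.sum_congr rfl h2]; simp
    rw [e1, e2]; ring
  have hcnot : ∀ i j, ¬ sat i j →
      ∑ t ∈ T i j, x t - ∑ k ∈ K i j, x k - ((T i j).card : ℝ) + ε ≤ ε - 1 := by
    intro i j hns
    have hns' : ¬ ((∀ t ∈ T i j, x t = 1) ∧ (∀ k ∈ K i j, x k = 0)) := hns
    by_cases hA : ∀ t ∈ T i j, x t = 1
    · have hB : ¬ ∀ k ∈ K i j, x k = 0 := fun hB => hns' ⟨hA, hB⟩
      push_neg at hB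
      obtain ⟨k, hk, hk1⟩ := hB
      have hk1' : x k = 1 := (hx k).resolve_left hk1
      have h1 : (1 : ℝ) ≤ ∑ k' ∈ K i j, x k' := by
        have := Finset.single_le_sum (fun t (_ : t ∈ K i j) => hx0 t) hk
        linarith
      have h2 := hsum_le (T i j)
      linarith
    · push_neg at hA
      obtain ⟨t, ht, ht1⟩ := hA
      have ht0 : x t = 0 := (hx t).resolve_right ht1
      have hsplit : ∑ u ∈ T i j, x u = x t + ∑ u ∈ (T i j).erase t, x u :=
        (Finset.add_sum_erase _ _ ht).symm
      have hcard : (((T i j).erase t).card : ℝ) = (T i j).card - 1 := by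
        rw [Finset.card_erase_of_mem ht]
        have h1 : 1 ≤ (T i j).card := Finset.card_pos.mpr ⟨t, ht⟩
        push_cast [Nat.cast_sub h1]
        ring
      have h1 : ∑ u ∈ T i j, x u ≤ ((T i j).card : ℝ) - 1 := by
        have := hsum_le ((T i j).erase t)
        rw [hcard] at this
        rw [hsplit, ht0]
        linarith
      have h2 := hsum_nonneg (K i j)
      linarith
  set h0 : Fin n → ι → ℝ := fun i j => if sat i j then 1 else 0 with hh0def
  have h0pos : ∀ i j, sat i j → h0 i j = 1 := fun i j hs => if_pos hs
  have h0neg : ∀ i j, ¬ sat i j → h0 i j = 0 := fun i j hs => if_neg hs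
  have h0vals : ∀ i j, h0 i j = 0 ∨ h0 i j = 1 := by
    intro i j
    by_cases hs : sat i j
    · exact Or.inr (h0pos i j hs)
    · exact Or.inl (h0neg i j hs)
  set m : ℝ := ∑ i : Fin n, ∑ j ∈ J i,
      w i * (-h0 i j * (∑ t ∈ T i j, x t - ∑ k ∈ K i j, x k - ((T i j).card : ℝ) + ε))
    with hmdef
  have hterm : ∀ i j,
      w i * (-h0 i j * (∑ t ∈ T i j, x t - ∑ k ∈ K i j, x k - ((T i j).card : ℝ) + ε))
        = if sat i j then -(w i * ε) else 0 := by
    intro i j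
    by_cases hs : sat i j
    · rw [if_pos hs, h0pos i j hs, hcsat i j hs]; ring
    · rw [if_neg hs, h0neg i j hs]; ring
  refine ⟨m, ⟨⟨h0, h0vals, rfl⟩, ?_⟩, ?_⟩
  · rintro v ⟨h, hhvals, rfl⟩
    apply Finset.sum_le_sum
    intro i _
    apply Finset.sum_le_sum
    intro j _
    apply mul_le_mul_of_nonneg_left _ (hw i).le
    by_cases hs : sat i j
    · rw [h0pos i j hs, hcsat i j hs]
      have hle : h i j ≤ 1 := by rcases hhvals i j with h' | h' <;> rw [h'] <;> norm_num
      nlinarith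
    · rw [h0neg i j hs]
      have hc := hcnot i j hs
      have hge : 0 ≤ h i j := by rcases hhvals i j with h' | h' <;> rw [h'] <;> norm_num
      nlinarith
  · have hεne : ε ≠ 0 := ne_of_gt hε
    have hm : m = ∑ i : Fin n, ∑ j ∈ J i, (if sat i j then -(w i * ε) else 0) := by
      rw [hmdef]
      exact Finset.sum_congr rfl fun i _ => Finset.sum_congr rfl fun j _ => hterm i j
    rw [hm, Finset.mul_sum]
    have hinner : ∀ i : Fin n,
        -(1 / ε) * ∑ j ∈ J i, (if sat i j then -(w i * ε) else 0)
          = if (∃ j ∈ J i, sat i j) then w i else 0 := by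
      intro i
      rw [Finset.mul_sum]
      have hstep : ∀ j ∈ J i,
          -(1 / ε) * (if sat i j then -(w i * ε) else 0) = if sat i j then w i else 0 := by
        intro j _
        by_cases hs : sat i j
        · rw [if_pos hs, if_pos hs]; field_simp
        · rw [if_neg hs, if_neg hs]; ring
      rw [Finset.sum_congr rfl hstep]
      by_cases hex : ∃ j ∈ J i, sat i j
      · obtain ⟨j0, hj0, hsj0⟩ := hex
        rw [if_pos ⟨j0, hj0, hsj0⟩]
        have hz : ∀ b ∈ J i, b ≠ j0 → (if sat i b then w i else 0) = 0 := by
          intro b hb hbne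
          have hnb : ¬ sat i b := fun hsb => hbne (hstrict x hx i b hb j0 hj0 hsb hsj0)
          rw [if_neg hnb]
        rw [Finset.sum_eq_single_of_mem j0 hj0 hz, if_pos hsj0]
      · rw [if_neg hex]
        apply Finset.sum_eq_zero
        intro j hj
        have hnj : ¬ sat i j := fun hs => hex ⟨j, hj, hs⟩
        rw [if_neg hnj]
    rw [Finset.sum_congr rfl fun i _ => hinner i]
    rw [Finset.sum_filter]
end

section
/- Define the free energy of a strict-DNF-encoded formula with clauses j as F(x) = -∑_j log(1 + exp(c·(∑_{t∈T_j} x_t - ∑_{k∈K_j} x_k - |T_j| + ε))) for binary x, confidence c > 0, and 0 < ε < 1. Then the limit as c → ∞ of -(1/(c·ε))·F(x) equals s_φ(x): it is 1 if x satisfies the strict DNF φ and 0 otherwise. -/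
/-!
The softplus function `y ↦ log (1 + exp y)` lies within `log 2` of `max y 0`, so
`log (1 + exp (c * a)) / c → max a 0` as `c → ∞`. For binary `x` the argument of a clause is
`ε` when the clause is satisfied and at most `ε - 1 < 0` otherwise, so after division by `ε`
each clause contributes its truth value in the limit, and strictness leaves at most one
clause contributing `1`.
-/

open Filter Real Topology

namespace Real

theorem max_le_log_one_add_exp (y : ℝ) : max y 0 ≤ log (1 + exp y) := by
  rw [le_log_iff_exp_le (by positivity)]
  rcases le_total y 0 with hy | hy
  · rw [max_eq_right hy, exp_zero]
    linarith [exp_pos y]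
  · rw [max_eq_left hy]
    linarith

theorem log_one_add_exp_le_max_add_log_two (y : ℝ) : log (1 + exp y) ≤ max y 0 + log 2 := by
  rw [← log_exp (max y 0), ← log_mul (exp_ne_zero _) two_ne_zero]
  gcongr
  have h1 : 1 ≤ exp (max y 0) := one_le_exp (le_max_right y 0)
  have hy : exp y ≤ exp (max y 0) := exp_le_exp.mpr (le_max_left y 0)
  linarith

theorem tendsto_log_one_add_exp_mul_div_atTop (a : ℝ) :
    Tendsto (fun c => log (1 + exp (c * a)) / c) atTop (𝓝 (max a 0)) := by
  have hupper : Tendsto (fun c : ℝ => max a 0 + log 2 / c) atTop (𝓝 (max a 0)) := by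
    simpa using tendsto_const_nhds.add ((tendsto_const_nhds (x := log 2)).div_atTop tendsto_id)
  have hmax : ∀ c : ℝ, 0 < c → max (c * a) 0 = c * max a 0 := fun c hc => by
    rw [mul_max_of_nonneg _ _ hc.le, mul_zero]
  refine tendsto_of_tendsto_of_tendsto_of_le_of_le' tendsto_const_nhds hupper ?_ ?_
    <;> filter_upwards [eventually_gt_atTop 0] with c hc
  · rw [le_div_iff₀ hc, mul_comm, ← hmax c hc]
    exact max_le_log_one_add_exp (c * a)
  · rw [div_le_iff₀ hc, add_mul, div_mul_cancel₀ _ hc.ne', mul_comm (max a 0), ← hmax c hc]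
    exact log_one_add_exp_le_max_add_log_two (c * a)

end Real

section Clause

variable {α : Type*} (T K : Finset α) (x : α → ℝ)

theorem sum_sub_sum_sub_card_eq_zero (hT : ∀ t ∈ T, x t = 1) (hK : ∀ k ∈ K, x k = 0) :
    ∑ t ∈ T, x t - ∑ k ∈ K, x k - (T.card : ℝ) = 0 := by
  simp [Finset.sum_congr rfl hT, Finset.sum_congr rfl hK]

/-- The left side is minus the number of literals of the clause violated by `x`. -/
theorem sum_sub_sum_sub_card_le_neg_one (hx : ∀ i, x i = 0 ∨ x i = 1)
    (hunsat : ¬((∀ t ∈ T, x t = 1) ∧ (∀ k ∈ K, x k = 0))) :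
    ∑ t ∈ T, x t - ∑ k ∈ K, x k - (T.card : ℝ) ≤ -1 := by
  have hT : ∑ t ∈ T, x t - (T.card : ℝ) = -∑ t ∈ T, (1 - x t) := by
    simp [Finset.sum_sub_distrib]
  have hT0 : ∀ t ∈ T, 0 ≤ 1 - x t := fun t _ => by rcases hx t with h | h <;> simp [h]
  have hK0 : ∀ k ∈ K, 0 ≤ x k := fun k _ => by rcases hx k with h | h <;> simp [h]
  rw [sub_right_comm, hT]
  rcases not_and_or.mp hunsat with hviolT | hviolK
  · push Not at hviolT
    obtain ⟨t, ht, hxt⟩ := hviolT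
    have : 1 - x t ≤ ∑ t ∈ T, (1 - x t) := Finset.single_le_sum hT0 ht
    linarith [Finset.sum_nonneg hK0, (hx t).resolve_right hxt]
  · push Not at hviolK
    obtain ⟨k, hk, hxk⟩ := hviolK
    have : x k ≤ ∑ k ∈ K, x k := Finset.single_le_sum hK0 hk
    linarith [Finset.sum_nonneg hT0, (hx k).resolve_left hxk]

open Classical in
theorem tendsto_clause_free_energy {ε : ℝ} (hε : 0 < ε) (hε1 : ε < 1)
    (hx : ∀ i, x i = 0 ∨ x i = 1) :
    Tendsto (fun c => log (1 + exp (c * (∑ t ∈ T, x t - ∑ k ∈ K, x k - (T.card : ℝ) + ε)))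
        / c / ε) atTop
      (𝓝 (if (∀ t ∈ T, x t = 1) ∧ (∀ k ∈ K, x k = 0) then 1 else 0)) := by
  convert (tendsto_log_one_add_exp_mul_div_atTop _).div_const ε using 2
  split_ifs with hsat
  · rw [sum_sub_sum_sub_card_eq_zero T K x hsat.1 hsat.2, zero_add, max_eq_left hε.le,
      div_self hε.ne']
  · have := sum_sub_sum_sub_card_le_neg_one T K x hx hsat
    rw [max_eq_right (by linarith), zero_div]

end Clause

theorem Finset.sum_boole_eq_ite_exists {ι : Type*} (s : Finset ι) (p : ι → Prop) [DecidablePred p]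
    (hunique : ∀ i ∈ s, ∀ j ∈ s, p i → p j → i = j) :
    ∑ i ∈ s, (if p i then (1 : ℝ) else 0) = if ∃ i ∈ s, p i then 1 else 0 := by
  split_ifs with h
  · obtain ⟨i, hi, hpi⟩ := h
    rw [Finset.sum_eq_single_of_mem i hi fun j hj hji =>
      if_neg fun hpj => hji (hunique j hj i hi hpj hpi), if_pos hpi]
  · push Not at h
    exact Finset.sum_eq_zero fun i hi => if_neg (h i hi)

open Classical in
theorem free_energy_limit_truth_value_general {ι : Type*} (J : Finset ι) (T K : ι → Finset ℕ)
    (ε : ℝ) (hε : 0 < ε) (hε1 : ε < 1)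
    (hstrict : ∀ y : ℕ → ℝ, (∀ i, y i = 0 ∨ y i = 1) → ∀ j1 ∈ J, ∀ j2 ∈ J,
      ((∀ t ∈ T j1, y t = 1) ∧ (∀ k ∈ K j1, y k = 0)) →
      ((∀ t ∈ T j2, y t = 1) ∧ (∀ k ∈ K j2, y k = 0)) → j1 = j2)
    (x : ℕ → ℝ) (hx : ∀ i, x i = 0 ∨ x i = 1) :
    Filter.Tendsto (fun c : ℝ =>
        -(1 / (c * ε)) * (-(∑ j ∈ J, Real.log (1 + Real.exp (c *
          (∑ t ∈ T j, x t - ∑ k ∈ K j, x k - ((T j).card : ℝ) + ε))))))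
      Filter.atTop
      (nhds (if ∃ j ∈ J, (∀ t ∈ T j, x t = 1) ∧ (∀ k ∈ K j, x k = 0)
        then (1 : ℝ) else 0)) := by
  have hlim := tendsto_finsetSum J fun j _ => tendsto_clause_free_energy (T j) (K j) x hε hε1 hx
  convert hlim using 2 with c
  · rw [neg_mul_neg, Finset.mul_sum]
    exact Finset.sum_congr rfl fun j _ => by ring
  · exact (Finset.sum_boole_eq_ite_exists J _ (hstrict x hx)).symm

open Classical in
theorem free_energy_limit_truth_value {ι : Type*} (J : Finset ι) (T K : ι → Finset ℕ)
    (ε : ℝ) (hε : 0 < ε) (hε1 : ε < 1)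
    (hdisj : ∀ j ∈ J, Disjoint (T j) (K j))
    (hstrict : ∀ y : ℕ → ℝ, (∀ i, y i = 0 ∨ y i = 1) → ∀ j1 ∈ J, ∀ j2 ∈ J,
      ((∀ t ∈ T j1, y t = 1) ∧ (∀ k ∈ K j1, y k = 0)) →
      ((∀ t ∈ T j2, y t = 1) ∧ (∀ k ∈ K j2, y k = 0)) → j1 = j2)
    (x : ℕ → ℝ) (hx : ∀ i, x i = 0 ∨ x i = 1) :
    Filter.Tendsto (fun c : ℝ =>
        -(1 / (c * ε)) * (-(∑ j ∈ J, Real.log (1 + Real.exp (c *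
          (∑ t ∈ T j, x t - ∑ k ∈ K j, x k - ((T j).card : ℝ) + ε))))))
      Filter.atTop
      (nhds (if ∃ j ∈ J, (∀ t ∈ T j, x t = 1) ∧ (∀ k ∈ K j, x k = 0)
        then (1 : ℝ) else 0)) :=
  free_energy_limit_truth_value_general J T K ε hε hε1 hstrict x hx
end

section
/- For binary h ∈ {0,1} and real weights: given a weighted conjunctive clause with weight w' > 0, positive literal set T, negative literal set K, and 0 < ε < 1, the minimum over h of -w'·h·(∑_{t∈T} x_t - ∑_{k∈K} x_k - |T| + ε) equals -w'·ε if the clause is satisfied by the binary assignment x and 0 otherwise. -/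
theorem weighted_clause_energy_min (T K : Finset ℕ) (hdisj : Disjoint T K)
    (w' ε : ℝ) (hw : 0 < w') (hε : 0 < ε) (hε1 : ε < 1)
    (x : ℕ → ℝ) (hx : ∀ i, x i = 0 ∨ x i = 1) :
    (((∀ t ∈ T, x t = 1) ∧ (∀ k ∈ K, x k = 0)) →
      min (-w' * (0 : ℝ) * (∑ t ∈ T, x t - ∑ k ∈ K, x k - (T.card : ℝ) + ε))
          (-w' * (1 : ℝ) * (∑ t ∈ T, x t - ∑ k ∈ K, x k - (T.card : ℝ) + ε)) = -w' * ε) ∧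
    (¬ ((∀ t ∈ T, x t = 1) ∧ (∀ k ∈ K, x k = 0)) →
      min (-w' * (0 : ℝ) * (∑ t ∈ T, x t - ∑ k ∈ K, x k - (T.card : ℝ) + ε))
          (-w' * (1 : ℝ) * (∑ t ∈ T, x t - ∑ k ∈ K, x k - (T.card : ℝ) + ε)) = 0) := by
  have hx0 : ∀ i, 0 ≤ x i := fun i => by rcases hx i with h | h <;> simp [h]
  have hx1 : ∀ i, x i ≤ 1 := fun i => by rcases hx i with h | h <;> simp [h]
  have hKnn : (0 : ℝ) ≤ ∑ k ∈ K, x k := Finset.sum_nonneg fun k _ => hx0 k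
  have hTle : ∑ t ∈ T, x t ≤ (T.card : ℝ) := by
    calc ∑ t ∈ T, x t ≤ ∑ _t ∈ T, (1 : ℝ) := Finset.sum_le_sum fun t _ => hx1 t
    _ = (T.card : ℝ) := by simp
  constructor
  · rintro ⟨hT, hK⟩
    have h1 : ∑ t ∈ T, x t = (T.card : ℝ) := by
      rw [Finset.sum_congr rfl hT]; simp
    have h2 : ∑ k ∈ K, x k = 0 := by
      rw [Finset.sum_congr rfl hK]; simp
    rw [h1, h2]
    have he : (T.card:ℝ) - 0 - (T.card:ℝ) + ε = ε := by ring
    rw [he]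
    rw [min_eq_right (by nlinarith)]
    ring
  · intro hns
    have hkey : ∑ t ∈ T, x t - ∑ k ∈ K, x k - (T.card : ℝ) + ε ≤ ε - 1 := by
      rw [not_and_or] at hns
      rcases hns with h | h
      · push_neg at h
        obtain ⟨t0, ht0, ht0v⟩ := h
        have ht0z : x t0 = 0 := (hx t0).resolve_right ht0v
        have : ∑ t ∈ T, x t = x t0 + ∑ t ∈ T.erase t0, x t :=
          (Finset.add_sum_erase T x ht0).symm
        have herr : ∑ t ∈ T.erase t0, x t ≤ (T.card : ℝ) - 1 := by
          calc ∑ t ∈ T.erase t0, x t ≤ ∑ _t ∈ T.erase t0, (1:ℝ) :=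
              Finset.sum_le_sum fun t _ => hx1 t
          _ = ((T.erase t0).card : ℝ) := by simp
          _ = (T.card : ℝ) - 1 := Finset.cast_card_erase_of_mem ht0
        linarith
      · push_neg at h
        obtain ⟨k0, hk0, hk0v⟩ := h
        have hk1 : x k0 = 1 := (hx k0).resolve_left hk0v
        have : ∑ k ∈ K, x k = x k0 + ∑ k ∈ K.erase k0, x k :=
          (Finset.add_sum_erase K x hk0).symm
        have herr : (0:ℝ) ≤ ∑ k ∈ K.erase k0, x k :=
          Finset.sum_nonneg fun k _ => hx0 k
        linarith
    have hneg : ∑ t ∈ T, x t - ∑ k ∈ K, x k - (T.card : ℝ) + ε < 0 := by linarith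
    rw [min_eq_left (by nlinarith)]
    ring
end
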